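/- arXiv:2101.00644 — 5 statements merged into one kernel-verified Lean document; each statement's English description precedes it below -/
import Mathlib

section
/- Let A_t be an attractor of the asynchronous transition system TS of a Boolean network BN, and let C = (𝕆,𝟙) be a control. Then C is an instantaneous target control for A_t (i.e., for every state s ∈ S, every fair infinite path of TS starting from C(s) eventually reaches a state of A_t) if and only if C(S) ⊆ bas^S(A_t), the strong basin of A_t in TS. -/
/-- A state of a Boolean network with `n` variables. -/
abbrev BNState (n : ℕ) := Fin n → Bool

/-- One asynchronous transition of the Boolean network with functions `F`:
either exactly one variable `i` changes and takes the value `F i s = !(s i)`,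
or the state stays the same and some variable `i` satisfies `F i s = s i`. -/
def Step {n : ℕ} (F : Fin n → BNState n → Bool) (s s' : BNState n) : Prop :=
  (∃ i, s' i = F i s ∧ s' i = !(s i) ∧ ∀ j, j ≠ i → s' j = s j) ∨
  (s' = s ∧ ∃ i, F i s = s i)

/-- The set of states reachable from `s` by a (possibly empty) sequence of transitions. -/
def reach {n : ℕ} (F : Fin n → BNState n → Bool) (s : BNState n) : Set (BNState n) :=
  {s' | Relation.ReflTransGen (Step F) s s'}

/-- An attractor: a minimal non-empty set `A` of states with `reach F s = A` for every `s ∈ A`. -/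
def IsAttractor {n : ℕ} (F : Fin n → BNState n → Bool) (A : Set (BNState n)) : Prop :=
  A.Nonempty ∧ (∀ s ∈ A, reach F s = A) ∧
  ∀ B, B ⊆ A → B.Nonempty → (∀ s ∈ B, reach F s = B) → B = A

/-- An infinite path of the transition system. -/
def IsPath {n : ℕ} (F : Fin n → BNState n → Bool) (π : ℕ → BNState n) : Prop :=
  ∀ k, Step F (π k) (π (k + 1))

/-- A state occurs infinitely often in the sequence `π`. -/
def InfOften {n : ℕ} (π : ℕ → BNState n) (x : BNState n) : Prop :=
  ∀ N, ∃ k, N ≤ k ∧ π k = x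

/-- Fairness: every possible next state of every state occurring infinitely often
also occurs infinitely often. -/
def Fair {n : ℕ} (F : Fin n → BNState n → Bool) (π : ℕ → BNState n) : Prop :=
  ∀ x, InfOften π x → ∀ y, Step F x y → InfOften π y

/-- The weak basin of `A`: states from which `A` is reachable. -/
def weakBasin {n : ℕ} (F : Fin n → BNState n → Bool) (A : Set (BNState n)) :
    Set (BNState n) :=
  {s | (reach F s ∩ A).Nonempty}

/-- The strong basin of an attractor `A`: states from which `A` is reachable and
no other attractor is reachable. -/
def strongBasin {n : ℕ} (F : Fin n → BNState n → Bool) (A : Set (BNState n)) :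
    Set (BNState n) :=
  {s | (reach F s ∩ A).Nonempty ∧
       ∀ A', IsAttractor F A' → A' ≠ A → reach F s ∩ A' = ∅}

/-- The application of the control `C = (O, I)` to a state. -/
def applyControl {n : ℕ} (O I : Finset (Fin n)) (s : BNState n) : BNState n :=
  fun i => if i ∈ O then false else if i ∈ I then true else s i

/-- The Boolean functions of the network under control `C = (O, I)`. -/
def ctrlF {n : ℕ} (O I : Finset (Fin n)) (F : Fin n → BNState n → Bool) :
    Fin n → BNState n → Bool :=
  fun i s => if i ∈ O then false else if i ∈ I then true else F i s

/-- The state space `S|_C` of the network under control `C = (O, I)`. -/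
def ctrlSpace {n : ℕ} (O I : Finset (Fin n)) : Set (BNState n) :=
  {s | (∀ i ∈ O, s i = false) ∧ (∀ i ∈ I, s i = true)}

/-- `S'` is a schema with off-set `O`, on-set `I` and don't-care-set `D`. -/
def IsSchema {n : ℕ} (S' : Set (BNState n)) (O I D : Finset (Fin n)) : Prop :=
  Disjoint O I ∧ Disjoint O D ∧ Disjoint I D ∧ O ∪ I ∪ D = Finset.univ ∧
  S' = {s : BNState n | (∀ i ∈ O, s i = false) ∧ (∀ i ∈ I, s i = true)}

/-- The strong basin, in the transition system with functions `F` and state space `SC`,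
of a target set of states `W`: the states of `SC` from which `W` is reachable and
no attractor disjoint from `W` is reachable. -/
def strongBasinSet {n : ℕ} (F : Fin n → BNState n → Bool) (SC W : Set (BNState n)) :
    Set (BNState n) :=
  {s | s ∈ SC ∧ (reach F s ∩ W).Nonempty ∧
       ∀ A', IsAttractor F A' → A' ∩ W = ∅ → reach F s ∩ A' = ∅}

section Aux
variable {n : ℕ} {F : Fin n → BNState n → Bool}

lemma reach_refl (s : BNState n) : s ∈ reach F s := Relation.ReflTransGen.refl

lemma reach_trans {a b c : BNState n} (hab : b ∈ reach F a) (hbc : c ∈ reach F b) :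
    c ∈ reach F a := Relation.ReflTransGen.trans hab hbc

lemma reach_mono {a b : BNState n} (hab : b ∈ reach F a) : reach F b ⊆ reach F a :=
  fun _ h => reach_trans hab h

lemma succ_exists (hn : 1 ≤ n) (F : Fin n → BNState n → Bool) (s : BNState n) :
    ∃ s', Step F s s' := by
  by_cases h : ∃ i, F i s = s i
  · exact ⟨s, Or.inr ⟨rfl, h⟩⟩
  · push_neg at h
    refine ⟨Function.update s ⟨0, hn⟩ (!(s ⟨0, hn⟩)), Or.inl ⟨⟨0, hn⟩, ?_, ?_, ?_⟩⟩
    · have := h ⟨0, hn⟩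
      simp only [Function.update_self]
      cases hF : F ⟨0, hn⟩ s <;> cases hs : s ⟨0, hn⟩ <;> simp_all
    · simp
    · intro j hj; simp [Function.update_of_ne hj]

lemma exists_fun_path {a b : BNState n} (h : Relation.ReflTransGen (Step F) a b) :
    ∃ (m : ℕ) (g : ℕ → BNState n), g 0 = a ∧ g m = b ∧ ∀ k, k < m → Step F (g k) (g (k+1)) := by
  induction h with
  | refl => exact ⟨0, fun _ => a, rfl, rfl, fun k hk => absurd hk (by omega)⟩
  | @tail b c hab hbc ih =>
    obtain ⟨m, g, h0, hm, hstep⟩ := ih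
    refine ⟨m + 1, fun k => if k ≤ m then g k else c, by simp [h0], by simp, ?_⟩
    intro k hk
    rcases Nat.lt_or_ge k m with h | h
    · simpa [Nat.le_of_lt h, Nat.succ_le_of_lt h] using hstep k h
    · have : k = m := by omega
      subst this
      simpa [hm] using hbc

lemma fun_path_reach {g : ℕ → BNState n} {m : ℕ}
    (hstep : ∀ k, k < m → Step F (g k) (g (k+1))) :
    ∀ k, k ≤ m → g k ∈ reach F (g 0) := by
  intro k
  induction k with
  | zero => exact fun _ => reach_refl _
  | succ k ih =>
    intro hk
    exact reach_trans (ih (by omega)) (Relation.ReflTransGen.single (hstep k (by omega)))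

lemma path_mem_reach {π : ℕ → BNState n} (hπ : IsPath F π) (k : ℕ) : π k ∈ reach F (π 0) := by
  induction k with
  | zero => exact reach_refl _
  | succ k ih => exact reach_trans ih (Relation.ReflTransGen.single (hπ k))

lemma path_mem_reach' {π : ℕ → BNState n} (hπ : IsPath F π) {k k' : ℕ} (h : k ≤ k') :
    π k' ∈ reach F (π k) := by
  induction k', h using Nat.le_induction with
  | base => exact reach_refl _
  | succ k' _ ih => exact reach_trans ih (Relation.ReflTransGen.single (hπ k'))

lemma exists_infOften (π : ℕ → BNState n) : ∃ x, InfOften π x := by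
  by_contra h
  push_neg at h
  simp only [InfOften] at h
  push_neg at h
  choose N hN using h
  exact hN (π (Finset.univ.sup N)) _ (Finset.le_sup (Finset.mem_univ _)) rfl

lemma infOften_isAttractor {π : ℕ → BNState n} (hπ : IsPath F π) (hf : Fair F π) :
    IsAttractor F {x | InfOften π x} := by
  have hreachX : ∀ x, InfOften π x → ∀ y ∈ reach F x, InfOften π y := by
    intro x hx y hy
    induction hy with
    | refl => exact hx
    | tail _ h2 ih => exact hf _ ih _ h2
  have hXreach : ∀ x, InfOften π x → ∀ y, InfOften π y → y ∈ reach F x := by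
    intro x hx y hy
    obtain ⟨k, _, hk⟩ := hx 0
    obtain ⟨k', hk'le, hk'⟩ := hy k
    have := path_mem_reach' hπ hk'le
    rwa [hk, hk'] at this
  have hxeq : ∀ x ∈ {x | InfOften π x}, reach F x = {x | InfOften π x} := by
    intro x hx
    ext y
    exact ⟨fun h => hreachX x hx y h, fun h => hXreach x hx y h⟩
  obtain ⟨x0, hx0⟩ := exists_infOften π
  refine ⟨⟨x0, hx0⟩, hxeq, ?_⟩
  rintro B hBsub ⟨b, hb⟩ hB
  rw [← hB b hb, hxeq b (hBsub hb)]

lemma attractor_disjoint {A A' : Set (BNState n)} (hA : IsAttractor F A) (hA' : IsAttractor F A')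
    (hne : A ≠ A') : A ∩ A' = ∅ := by
  by_contra h
  obtain ⟨z, hz, hz'⟩ := Set.nonempty_iff_ne_empty.mpr h
  exact hne ((hA.2.1 z hz).symm.trans (hA'.2.1 z hz'))

end Aux
section Aux2
variable {n : ℕ} {F : Fin n → BNState n → Bool}

lemma glue {len : ℕ → ℕ} (hlen : ∀ j, 1 ≤ len j) {seg : ℕ → ℕ → BNState n}
    (hstep : ∀ j k, k < len j → Step F (seg j k) (seg j (k+1)))
    (hmatch : ∀ j, seg (j+1) 0 = seg j (len j)) :
    ∃ π : ℕ → BNState n, IsPath F π ∧ π 0 = seg 0 0 ∧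
      (∀ m, ∃ j k, k < len j ∧ π m = seg j k) ∧
      (∀ j, ∃ m, j ≤ m ∧ π m = seg j 0) := by
  classical
  set off : ℕ → ℕ := fun j => (Finset.range j).sum len with hoff
  have hoff0 : off 0 = 0 := by simp [hoff]
  have hoffsucc : ∀ j, off (j+1) = off j + len j := by
    intro j; simp [hoff, Finset.sum_range_succ]
  have hoffmono : ∀ {j j' : ℕ}, j ≤ j' → off j ≤ off j' := by
    intro j j' h
    exact Finset.sum_le_sum_of_subset (Finset.range_subset_range.mpr h)
  have hoffge : ∀ j, j ≤ off j := by
    intro j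
    induction j with
    | zero => omega
    | succ j ih => have := hoffsucc j; have := hlen j; omega
  set J : ℕ → ℕ := fun m => Nat.findGreatest (fun j => off j ≤ m) m with hJ
  have hJ1 : ∀ m, off (J m) ≤ m := by
    intro m
    exact Nat.findGreatest_spec (P := fun j => off j ≤ m) (Nat.zero_le m) (by omega)
  have hJ2 : ∀ m, m < off (J m + 1) := by
    intro m
    by_contra h
    push_neg at h
    exact Nat.findGreatest_is_greatest (P := fun j => off j ≤ m)
      (Nat.lt_succ_self (J m)) (le_trans (hoffge _) h) h
  have hJuniq : ∀ m j, off j ≤ m → m < off (j+1) → J m = j := by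
    intro m j h1 h2
    have hle : j ≤ J m := Nat.le_findGreatest (le_trans (hoffge j) h1) h1
    rcases Nat.lt_or_ge (J m) (j+1) with h | h
    · omega
    · have := hoffmono h
      have := hJ1 m
      omega
  have hrlt : ∀ m, m - off (J m) < len (J m) := by
    intro m
    have h1 := hJ1 m
    have h2 := hJ2 m
    have := hoffsucc (J m)
    omega
  set π : ℕ → BNState n := fun m => seg (J m) (m - off (J m)) with hπ
  have hocc : ∀ j k, k < len j → π (off j + k) = seg j k := by
    intro j k hk
    have hJeq : J (off j + k) = j := by
      apply hJuniq
      · omega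
      · have := hoffsucc j; omega
    have he : off j + k - off j = k := by omega
    simp only [hπ, hJeq, he]
  have hpath : IsPath F π := by
    intro m
    have h1 := hJ1 m
    have h2 := hJ2 m
    have h3 := hoffsucc (J m)
    have hr := hrlt m
    obtain ⟨r, hr2⟩ : ∃ r, m = off (J m) + r := ⟨m - off (J m), by omega⟩
    have hrr : r < len (J m) := by omega
    have hπm : π m = seg (J m) r := by
      have he : m - off (J m) = r := by omega
      simp only [hπ, he]
    rcases Nat.lt_or_ge (r + 1) (len (J m)) with hc | hc
    · have hJeq : J (m+1) = J m := hJuniq (m+1) (J m) (by omega) (by omega)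
      have he : m + 1 - off (J m) = r + 1 := by omega
      have : π (m+1) = seg (J m) (r + 1) := by
        simp only [hπ, hJeq, he]
      rw [this, hπm]
      exact hstep _ _ hrr
    · have hc' : r + 1 = len (J m) := by omega
      have hm1 : m + 1 = off (J m + 1) := by omega
      have hJeq : J (m+1) = J m + 1 := hJuniq (m+1) (J m + 1) (by omega)
        (by have := hoffsucc (J m + 1); have := hlen (J m + 1); omega)
      have h0 : m + 1 - off (J m + 1) = 0 := by omega
      have : π (m+1) = seg (J m) (r + 1) := by
        simp only [hπ, hJeq, h0]
        rw [hmatch, hc']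
      rw [this, hπm]
      exact hstep _ _ hrr
  refine ⟨π, hpath, ?_, ?_, ?_⟩
  · have := hocc 0 0 (hlen 0)
    simpa [hoff0] using this
  · intro m
    exact ⟨J m, m - off (J m), hrlt m, rfl⟩
  · intro j
    refine ⟨off j, hoffge j, ?_⟩
    simpa using hocc j 0 (hlen j)
end Aux2
section Aux3
variable {n : ℕ} {F : Fin n → BNState n → Bool}

lemma prepend_fair {s t : BNState n} (hst : t ∈ reach F s)
    {π : ℕ → BNState n} (hπ : IsPath F π) (hf : Fair F π) (h0 : π 0 = t) :
    ∃ π' : ℕ → BNState n, IsPath F π' ∧ Fair F π' ∧ π' 0 = s ∧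
      ∀ k, π' k ∈ Set.range π ∨ t ∈ reach F (π' k) := by
  induction hst using Relation.ReflTransGen.head_induction_on with
  | refl => exact ⟨π, hπ, hf, h0, fun k => Or.inl ⟨k, rfl⟩⟩
  | @head a b hab hbt ih =>
    obtain ⟨π'', hp'', hf'', h0'', hprop''⟩ := ih
    refine ⟨fun k => match k with | 0 => a | (k+1) => π'' k, ?_, ?_, rfl, ?_⟩
    · intro k
      match k with
      | 0 =>
        show Step F a (π'' 0)
        rw [h0'']
        exact hab
      | (k+1) => exact hp'' k

    · have htr : ∀ x, InfOften (fun k => match k with | 0 => a | (k+1) => π'' k) x ↔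
          InfOften π'' x := by
        intro x
        constructor
        · intro h N
          obtain ⟨k, hk1, hk2⟩ := h (N+1)
          match k, hk1 with
          | (k+1), hk1 => exact ⟨k, by omega, hk2⟩
        · intro h N
          obtain ⟨k, hk1, hk2⟩ := h N
          exact ⟨k+1, by omega, hk2⟩
      intro x hx y hxy
      rw [htr] at hx ⊢
      exact hf'' x hx y hxy
    · intro k
      match k with
      | 0 =>
        right
        exact Relation.ReflTransGen.head hab hbt
      | (k+1) =>
        rcases hprop'' k with h | h
        · exact Or.inl h
        · right
          exact h
end Aux3
section Aux4
variable {n : ℕ} {F : Fin n → BNState n → Bool}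

lemma fair_in_closed (hsucc : ∀ s : BNState n, ∃ s', Step F s s')
    {A : Set (BNState n)} (hA : ∀ x ∈ A, reach F x = A) {t : BNState n} (ht : t ∈ A) :
    ∃ π : ℕ → BNState n, IsPath F π ∧ Fair F π ∧ π 0 = t ∧ ∀ k, π k ∈ A := by
  classical
  have segOf : ∀ (c : BNState n) (p : BNState n × BNState n),
      ∃ (m : ℕ) (g : ℕ → BNState n), 1 ≤ m ∧ g 0 = c ∧
        (c ∈ A → (∀ k, k < m → Step F (g k) (g (k+1))) ∧ (∀ k, k ≤ m → g k ∈ A) ∧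
          (p.1 ∈ A → Step F p.1 p.2 → g m = p.2)) := by
    intro c p
    by_cases hc : c ∈ A
    · by_cases hp : p.1 ∈ A ∧ Step F p.1 p.2
      · have hreach : p.1 ∈ reach F c := by rw [hA c hc]; exact hp.1
        obtain ⟨m0, g0, h0, hm0, hstep0⟩ := exists_fun_path hreach
        refine ⟨m0 + 1, fun k => if k ≤ m0 then g0 k else p.2, by omega, by simp [h0],
          fun _ => ⟨?_, ?_, ?_⟩⟩
        · intro k hk
          rcases Nat.lt_or_ge k m0 with h | h
          · simpa [Nat.le_of_lt h, Nat.succ_le_of_lt h] using hstep0 k h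
          · have hkm : k = m0 := by omega
            subst hkm
            simpa [hm0] using hp.2
        · intro k hk
          rcases le_or_gt k m0 with h | h
          · have := fun_path_reach hstep0 k h
            rw [h0, hA c hc] at this
            simpa [h] using this
          · have : p.2 ∈ A := by
              rw [← hA p.1 hp.1]
              exact Relation.ReflTransGen.single hp.2
            simpa [Nat.not_le.mpr h] using this
        · intro _ _
          simp
      · obtain ⟨c', hc'⟩ := hsucc c
        refine ⟨1, fun k => if k = 0 then c else c', le_rfl, by simp,
          fun _ => ⟨?_, ?_, fun h1 h2 => absurd ⟨h1, h2⟩ hp⟩⟩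
        · intro k hk
          have : k = 0 := by omega
          subst this
          simpa using hc'
        · intro k hk
          rcases Nat.eq_or_lt_of_le hk with h | h
          · have : c' ∈ A := by
              rw [← hA c hc]
              exact Relation.ReflTransGen.single hc'
            simpa [h] using this
          · have : k = 0 := by omega
            subst this
            simpa using hc
    · exact ⟨1, fun _ => c, le_rfl, rfl, fun h => absurd h hc⟩
  choose m g hm hg0 hrest using segOf
  set L : List (BNState n × BNState n) := (Finset.univ : Finset (BNState n × BNState n)).toList
    with hLdef
  have hL : ∀ p : BNState n × BNState n, p ∈ L := fun p => by
    simp [hLdef, Finset.mem_toList]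
  have hNL : 0 < L.length := List.length_pos_of_mem (hL (t, t))
  set P : ℕ → BNState n × BNState n := fun j => L.get ⟨j % L.length, Nat.mod_lt _ hNL⟩
    with hPdef
  set cp : ℕ → BNState n := fun j => Nat.rec t (fun j c => g c (P j) (m c (P j))) j with hcpdef
  have hcp0 : cp 0 = t := rfl
  have hcpsucc : ∀ j, cp (j+1) = g (cp j) (P j) (m (cp j) (P j)) := fun j => rfl
  have hcpA : ∀ j, cp j ∈ A := by
    intro j
    induction j with
    | zero => exact ht
    | succ j ih =>
      rw [hcpsucc]
      exact ((hrest (cp j) (P j) ih).2.1) _ le_rfl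
  set seg : ℕ → ℕ → BNState n := fun j => g (cp j) (P j) with hsegdef
  set len : ℕ → ℕ := fun j => m (cp j) (P j) with hlendef
  have hseg0 : ∀ j, seg j 0 = cp j := fun j => hg0 _ _
  have hsegstep : ∀ j k, k < len j → Step F (seg j k) (seg j (k+1)) :=
    fun j k hk => ((hrest (cp j) (P j) (hcpA j)).1) k hk
  have hsegA : ∀ j k, k ≤ len j → seg j k ∈ A :=
    fun j k hk => ((hrest (cp j) (P j) (hcpA j)).2.1) k hk
  have hmatch : ∀ j, seg (j+1) 0 = seg j (len j) := by
    intro j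
    rw [hseg0 (j+1), hcpsucc j]
  obtain ⟨π, hπpath, hπ0, hπmem, hπocc⟩ := glue (fun j => hm _ _) hsegstep hmatch
  have hπA : ∀ k, π k ∈ A := by
    intro k
    obtain ⟨j, r, hr, he⟩ := hπmem k
    rw [he]
    exact hsegA j r (le_of_lt hr)
  refine ⟨π, hπpath, ?_, by rw [hπ0, hseg0, hcp0], hπA⟩
  intro x hx y hxy N
  have hxA : x ∈ A := by
    obtain ⟨k, _, hk⟩ := hx 0
    rw [← hk]
    exact hπA k
  obtain ⟨i, hi⟩ := List.mem_iff_get.mp (hL (x, y))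
  set j := i.1 + L.length * N with hjdef
  have hPj : P j = (x, y) := by
    have h1 : j % L.length = i.1 := by
      rw [hjdef, Nat.add_mul_mod_self_left, Nat.mod_eq_of_lt i.2]
    rw [hPdef]
    simp only
    rw [← hi]
    congr 1
    exact Fin.ext h1
  have hend : seg j (len j) = y := by
    have h3 := (hrest (cp j) (P j) (hcpA j)).2.2
    have h4 : seg j (len j) = (P j).2 := h3 (by rw [hPj]; exact hxA) (by rw [hPj]; exact hxy)
    rw [h4, hPj]
  obtain ⟨mm, hmm1, hmm2⟩ := hπocc (j+1)
  refine ⟨mm, ?_, ?_⟩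
  · have : N ≤ L.length * N := Nat.le_mul_of_pos_left N hNL
    omega
  · rw [hmm2, hmatch, hend]

lemma exists_reachable_closed (u : BNState n) :
    ∃ A : Set (BNState n), A.Nonempty ∧ A ⊆ reach F u ∧ ∀ x ∈ A, reach F x = A := by
  classical
  set c : BNState n → ℕ := fun v => (Set.toFinite (reach F v)).toFinset.card with hcdef
  obtain ⟨v, hv, hmin⟩ := Set.exists_min_image (reach F u) c (Set.toFinite _) ⟨u, reach_refl u⟩
  refine ⟨reach F v, ⟨v, reach_refl v⟩, reach_mono hv, ?_⟩
  intro x hx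
  have hsub : reach F x ⊆ reach F v := reach_mono hx
  have hxu : x ∈ reach F u := reach_trans hv hx
  have hcard : c v ≤ c x := hmin x hxu
  have hfsub : (Set.toFinite (reach F x)).toFinset ⊆ (Set.toFinite (reach F v)).toFinset := by
    intro y hy
    rw [Set.Finite.mem_toFinset] at hy ⊢
    exact hsub hy
  have := Finset.eq_of_subset_of_card_le hfsub hcard
  have h2 : reach F x = reach F v := by
    ext y
    rw [← Set.Finite.mem_toFinset (Set.toFinite (reach F x)),
      ← Set.Finite.mem_toFinset (Set.toFinite (reach F v)), this]
  exact h2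
end Aux4
/-- `C` is an instantaneous target control for the attractor `At`
iff `C(S) ⊆ bas^S(At)`. -/
theorem itc_characterisation {n : ℕ} (hn : 1 ≤ n) (F : Fin n → BNState n → Bool)
    (At : Set (BNState n)) (hAt : IsAttractor F At)
    (O I : Finset (Fin n)) (hOI : Disjoint O I) :
    (∀ s : BNState n, ∀ π : ℕ → BNState n,
        IsPath F π → Fair F π → π 0 = applyControl O I s → ∃ k, π k ∈ At)
    ↔ Set.range (applyControl O I) ⊆ strongBasin F At := by
  have hsucc := succ_exists hn F
  constructor
  · intro H
    rintro u ⟨s, rfl⟩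
    have h1 : (reach F (applyControl O I s) ∩ At).Nonempty := by
      obtain ⟨A0, ⟨a0, ha0⟩, hA0sub, hA0cl⟩ :=
        exists_reachable_closed (F := F) (applyControl O I s)
      obtain ⟨π, hπ, hfair, hπ0, _⟩ := fair_in_closed hsucc hA0cl ha0
      obtain ⟨π', hπ', hfair', hπ'0, _⟩ := prepend_fair (hA0sub ha0) hπ hfair hπ0
      obtain ⟨k, hk⟩ := H s π' hπ' hfair' hπ'0
      refine ⟨π' k, ?_, hk⟩
      have := path_mem_reach hπ' k
      rwa [hπ'0] at this
    refine ⟨h1, ?_⟩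
    intro A' hA' hne
    by_contra hcon
    obtain ⟨z, hz1, hz2⟩ := Set.nonempty_iff_ne_empty.mpr hcon
    obtain ⟨π, hπ, hfair, hπ0, hπA'⟩ := fair_in_closed hsucc hA'.2.1 hz2
    obtain ⟨π', hπ', hfair', hπ'0, hprop⟩ := prepend_fair hz1 hπ hfair hπ0
    obtain ⟨k, hk⟩ := H s π' hπ' hfair' hπ'0
    have hdisj : A' ∩ At = ∅ := attractor_disjoint hA' hAt hne
    rcases hprop k with ⟨mm, hmm⟩ | hreach
    · have h2 : π' k ∈ A' := hmm ▸ hπA' mm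
      have : π' k ∈ A' ∩ At := ⟨h2, hk⟩
      rw [hdisj] at this
      exact this
    · have hzAt : z ∈ At := by
        rw [← hAt.2.1 (π' k) hk]
        exact hreach
      have : z ∈ A' ∩ At := ⟨hz2, hzAt⟩
      rw [hdisj] at this
      exact this
  · intro hsub s π hπ hfair hπ0
    have hX := infOften_isAttractor hπ hfair
    obtain ⟨x0, hx0⟩ := exists_infOften π
    have hXsub : {x | InfOften π x} ⊆ reach F (applyControl O I s) := by
      intro y hy
      obtain ⟨k, _, hk⟩ := hy 0
      rw [← hπ0, ← hk]
      exact path_mem_reach hπ k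
    have hmem : applyControl O I s ∈ strongBasin F At := hsub ⟨s, rfl⟩
    by_cases hXA : {x | InfOften π x} = At
    · obtain ⟨k, _, hk⟩ := hx0 0
      refine ⟨k, ?_⟩
      rw [← hXA, hk]
      exact hx0
    · have hempty := hmem.2 _ hX hXA
      have : x0 ∈ reach F (applyControl O I s) ∩ {x | InfOften π x} := ⟨hXsub hx0, hx0⟩
      rw [hempty] at this
      exact absurd this (Set.notMem_empty _)
end

section
/- Let A_t be an attractor of the asynchronous transition system TS of a Boolean network BN, and let C = (𝕆,𝟙) be a control. Then C is a temporary target control for A_t (i.e., for every state s ∈ S and every fair infinite path ρ = ρ_0 → ρ_1 → … of TS|_C starting from ρ_0 = C(s), there exists t_0 ≥ 0 such that for all t ≥ t_0, every fair infinite path of TS starting from ρ_t eventually reaches a state of A_t) if and only if bas^S_{TS}(A_t) ∩ S|_C ≠ ∅ and C(S) ⊆ bas^S_{TS|_C}(bas^S_{TS}(A_t) ∩ S|_C), where bas^S_{TS|_C}(W) denotes the set of states s ∈ S|_C such that reach_{TS|_C}(s) ∩ W ≠ ∅ and reach_{TS|_C}(s) ∩ A' = ∅ for every attractor A' of TS|_C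 with A' ∩ W = ∅. -/
/-!
A fair path eventually stays in an attractor, namely the set of states it visits infinitely
often. Conversely, every attractor reachable from `s` arises this way: walk from `s` into it,
then loop forever along a closed walk through all of its states. Hence "every fair path from `y`
meets `At`" says exactly that `y` lies in the strong basin of `At`, and "every fair path of
`TS|_C` from `C(s)` eventually stays in `W = bas^S_TS(At) ∩ S|_C`" says that every attractor of
`TS|_C` reachable from `C(s)` meets `W`, because `W` is closed under reachability in `TS|_C`.
-/

open Filter List Relation

section ClosedWalks

variable {α : Type*} {r : α → α → Prop}

theorem List.IsChain.cons_append_of_getLast? {a b c : α} {l₁ l₂ : List α}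
    (h₁ : IsChain r (a :: l₁)) (hb : (a :: l₁).getLast? = some b)
    (h₂ : IsChain r (b :: l₂)) (hc : (b :: l₂).getLast? = some c) :
    IsChain r (a :: (l₁ ++ l₂)) ∧ (a :: (l₁ ++ l₂)).getLast? = some c := by
  rw [← cons_append]
  refine ⟨h₁.append h₂.tail fun x hx y hy => ?_, ?_⟩
  · rw [hb, Option.mem_some_iff] at hx
    exact hx ▸ h₂.rel_head? hy
  · rw [getLast?_append, hb, ← hc, getLast?_cons]
    cases l₂.getLast? <;> rfl

theorem exists_isChain_getLast?_of_reflTransGen {a b : α} (h : ReflTransGen r a b) :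
    ∃ l, IsChain r (a :: l) ∧ (a :: l).getLast? = some b := by
  obtain ⟨l, hl, hlast⟩ := exists_isChain_cons_of_relationReflTransGen h
  exact ⟨l, hl, by rw [getLast?_eq_some_getLast (cons_ne_nil a l), hlast]⟩

theorem exists_isChain_cycle_of_finite {a : α} (hloop : TransGen r a a) {T : Set α}
    (hT : T.Finite) (hreach : ∀ b ∈ T, ReflTransGen r a b ∧ ReflTransGen r b a) :
    ∃ l, l ≠ [] ∧ IsChain r (a :: l) ∧ (a :: l).getLast? = some a ∧ ∀ b ∈ T, b ∈ a :: l := by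
  induction T, hT using Set.Finite.induction_on with
  | empty =>
    obtain ⟨c, hac, hca⟩ := TransGen.head'_iff.mp hloop
    obtain ⟨l, hl, hlast⟩ := exists_isChain_getLast?_of_reflTransGen hca
    exact ⟨c :: l, cons_ne_nil c l, hl.cons_cons hac, by rwa [getLast?_cons_cons], by simp⟩
  | @insert b T _ _ ih =>
    obtain ⟨l, hne, hl, hlast, hT⟩ := ih fun x hx => hreach x (Set.mem_insert_of_mem b hx)
    obtain ⟨l₁, hl₁, hlast₁⟩ :=
      exists_isChain_getLast?_of_reflTransGen (hreach b (Set.mem_insert b T)).1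
    obtain ⟨l₂, hl₂, hlast₂⟩ :=
      exists_isChain_getLast?_of_reflTransGen (hreach b (Set.mem_insert b T)).2
    obtain ⟨hc₂, hlast₂'⟩ := hl₂.cons_append_of_getLast? hlast₂ hl hlast
    obtain ⟨hc₁, hlast₁'⟩ := hl₁.cons_append_of_getLast? hlast₁ hc₂ hlast₂'
    refine ⟨l₁ ++ (l₂ ++ l), by simp [hne], hc₁, hlast₁', ?_⟩
    rintro x (rfl | hx)
    · exact mem_append_left _ (mem_of_getLast? hlast₁)
    · have := hT x hx
      simp only [mem_cons, mem_append] at this ⊢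
      tauto

theorem exists_path_of_isChain_cycle {a : α} {l : List α} (hne : l ≠ [])
    (hl : IsChain r (a :: l)) (hlast : (a :: l).getLast? = some a) :
    ∃ π : ℕ → α, π 0 = a ∧ (∀ k, r (π k) (π (k + 1))) ∧
      ∀ b ∈ a :: l, ∃ᶠ k in atTop, π k = b := by
  set w := a :: l
  set L := l.length
  have hL : 0 < L := length_pos_of_ne_nil hne
  have hwL : w.length = L + 1 := length_cons
  have hwrap : w.getD L a = w.getD 0 a := by
    rw [getLast?_eq_getElem?, hwL, Nat.add_sub_cancel] at hlast
    rw [getD_eq_getElem?_getD, hlast]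
    rfl
  have hstep : ∀ i < L, r (w.getD i a) (w.getD (i + 1) a) := fun i hi => by
    rw [getD_eq_getElem _ _ (by omega), getD_eq_getElem _ _ (by omega)]
    exact hl.getElem i (by omega)
  have hnext : ∀ t, w.getD ((t + 1) % L) a = w.getD (t % L + 1) a := fun t => by
    rw [← Nat.mod_add_mod]
    rcases Nat.lt_or_ge (t % L + 1) L with h | h
    · rw [Nat.mod_eq_of_lt h]
    · rw [show t % L + 1 = L by have := Nat.mod_lt t hL; omega, Nat.mod_self, hwrap]
  refine ⟨fun t => w.getD (t % L) a, by simp [w], fun t => ?_, fun b hb => ?_⟩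
  · simpa only [hnext] using hstep _ (Nat.mod_lt t hL)
  · obtain ⟨i, hi, hib⟩ : ∃ i < L, w.getD i a = b := by
      obtain ⟨i, hi, rfl⟩ := getElem_of_mem hb
      rcases Nat.lt_or_ge i L with h | h
      · exact ⟨i, h, getD_eq_getElem _ _ hi⟩
      · obtain rfl : i = L := by omega
        exact ⟨0, hL, by rw [← hwrap, getD_eq_getElem _ _ hi]⟩
    refine frequently_atTop.2 fun N => ⟨i + L * N, by nlinarith, ?_⟩
    simp only [Nat.add_mul_mod_self_left, Nat.mod_eq_of_lt hi, hib]

theorem exists_path_frequently_of_finite {a : α} (hloop : TransGen r a a) {T : Set α}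
    (hT : T.Finite) (hreach : ∀ b ∈ T, ReflTransGen r a b ∧ ReflTransGen r b a) :
    ∃ π : ℕ → α, π 0 = a ∧ (∀ k, r (π k) (π (k + 1))) ∧ ∀ b ∈ T, ∃ᶠ k in atTop, π k = b := by
  obtain ⟨l, hne, hl, hlast, hT⟩ := exists_isChain_cycle_of_finite hloop hT hreach
  obtain ⟨π, hπ0, hπ, hfreq⟩ := exists_path_of_isChain_cycle hne hl hlast
  exact ⟨π, hπ0, hπ, fun b hb => hfreq b (hT b hb)⟩

end ClosedWalks

section Dynamics

variable {n : ℕ} {G : Fin n → BNState n → Bool} {A B : Set (BNState n)} {s : BNState n}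

theorem reach_subset_of_mem_reach {t : BNState n} (h : t ∈ reach G s) :
    reach G t ⊆ reach G s :=
  fun _ hu => ReflTransGen.trans h hu

theorem exists_step (hn : 1 ≤ n) (s : BNState n) : ∃ s', Step G s s' := by
  set i : Fin n := ⟨0, hn⟩
  by_cases h : G i s = s i
  · exact ⟨s, Or.inr ⟨rfl, i, h⟩⟩
  · refine ⟨Function.update s i (G i s), Or.inl ⟨i, by simp, ?_, fun j hj => by simp [hj]⟩⟩
    simpa [Bool.eq_not_iff] using h

theorem IsPath.mem_reach {π : ℕ → BNState n} (hπ : IsPath G π) {k t : ℕ} (hkt : k ≤ t) :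
    π t ∈ reach G (π k) := by
  induction t, hkt using Nat.le_induction with
  | base => exact ReflTransGen.refl
  | succ t _ ih => exact ih.tail (hπ t)

theorem IsAttractor.mem_reach_iff (hA : IsAttractor G A) {a b : BNState n} (ha : a ∈ A) :
    b ∈ reach G a ↔ b ∈ A := by
  rw [hA.2.1 a ha]

theorem IsAttractor.eq_of_mem (hA : IsAttractor G A) (hB : IsAttractor G B) {a : BNState n}
    (haA : a ∈ A) (haB : a ∈ B) : A = B := by
  rw [← hA.2.1 a haA, hB.2.1 a haB]

theorem isAttractor_of_reach_eq (hne : A.Nonempty) (h : ∀ a ∈ A, reach G a = A) :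
    IsAttractor G A := by
  refine ⟨hne, h, fun B hBA ⟨b, hb⟩ hB => ?_⟩
  rw [← hB b hb, h b (hBA hb)]

theorem exists_isAttractor_subset_reach (s : BNState n) :
    ∃ A, IsAttractor G A ∧ A ⊆ reach G s := by
  obtain ⟨x, hx, hmin⟩ := Set.exists_min_image (reach G s) (fun x => (reach G x).ncard)
    (Set.toFinite _) ⟨s, ReflTransGen.refl⟩
  refine ⟨reach G x, isAttractor_of_reach_eq ⟨x, ReflTransGen.refl⟩ fun y hy => ?_,
    reach_subset_of_mem_reach hx⟩
  exact Set.eq_of_subset_of_ncard_le (reach_subset_of_mem_reach hy)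
    (hmin y (reach_subset_of_mem_reach hx hy)) (Set.toFinite _)

theorem infOften_iff_frequently {π : ℕ → BNState n} {x : BNState n} :
    InfOften π x ↔ ∃ᶠ t in atTop, π t = x :=
  frequently_atTop.symm

theorem Fair.exists_isAttractor {π : ℕ → BNState n} (hπ : IsPath G π) (hf : Fair G π) :
    ∃ A N, IsAttractor G A ∧ ∀ t, N ≤ t → π t ∈ A := by
  set A := {x | InfOften π x}
  have hrare : ∀ x, ∀ᶠ t in atTop, x ∈ A ∨ π t ≠ x := fun x => by
    by_cases hx : x ∈ A
    · exact Eventually.of_forall fun _ => Or.inl hx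
    · exact (not_frequently.mp (infOften_iff_frequently.not.mp hx)).mono fun _ => Or.inr
  obtain ⟨N, hN⟩ := eventually_atTop.mp (eventually_all.mpr hrare)
  have hA : ∀ t, N ≤ t → π t ∈ A := fun t ht => ((hN t ht) (π t)).resolve_right (· rfl)
  refine ⟨A, N, isAttractor_of_reach_eq ⟨π N, hA N le_rfl⟩ fun x hx => ?_, hA⟩
  refine Set.Subset.antisymm (fun y hy => ?_) fun y hy => ?_
  · induction hy with
    | refl => exact hx
    | tail _ hstep ih => exact hf _ ih _ hstep
  · obtain ⟨k, -, rfl⟩ := hx 0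
    obtain ⟨t, hkt, rfl⟩ := hy k
    exact hπ.mem_reach hkt

theorem IsPath.exists_prepend {π : ℕ → BNState n} (hπ : IsPath G π) (hs : π 0 ∈ reach G s) :
    ∃ π', IsPath G π' ∧ π' 0 = s ∧ ∃ p, ∀ t, π' (t + p) = π t := by
  induction hs using ReflTransGen.head_induction_on with
  | refl => exact ⟨π, hπ, rfl, 0, fun _ => rfl⟩
  | head hstep _ ih =>
    obtain ⟨π', hπ', hπ'0, p, hp⟩ := ih
    refine ⟨Stream'.cons _ π', fun k => ?_, rfl, p + 1, hp⟩
    cases k with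
    | zero => exact (show Step G _ (π' 0) from hπ'0 ▸ hstep)
    | succ k => exact hπ' k

theorem infOften_iff_of_forall_add_eq {π π' : ℕ → BNState n} {p : ℕ}
    (hp : ∀ t, π' (t + p) = π t) {x : BNState n} : InfOften π' x ↔ InfOften π x := by
  simp only [infOften_iff_frequently, ← hp]
  conv_lhs => rw [← map_add_atTop_eq_nat p]
  exact frequently_map

theorem Fair.of_forall_add_eq {π π' : ℕ → BNState n} {p : ℕ} (hp : ∀ t, π' (t + p) = π t)
    (hf : Fair G π) : Fair G π' := fun x hx y hxy =>
  (infOften_iff_of_forall_add_eq hp).2 (hf x ((infOften_iff_of_forall_add_eq hp).1 hx) y hxy)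

theorem fair_of_forall_mem_of_infOften (hA : IsAttractor G A) {π : ℕ → BNState n}
    (hπA : ∀ t, π t ∈ A) (hinf : ∀ a ∈ A, InfOften π a) : Fair G π := by
  intro x hx y hxy
  obtain ⟨k, -, rfl⟩ := hx 0
  exact hinf y ((hA.mem_reach_iff (hπA k)).1 (ReflTransGen.single hxy))

theorem IsAttractor.exists_fair_path (hn : 1 ≤ n) (hA : IsAttractor G A)
    (hs : (reach G s ∩ A).Nonempty) :
    ∃ π, IsPath G π ∧ Fair G π ∧ π 0 = s ∧ ∃ N, ∀ t, N ≤ t → π t ∈ A := by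
  obtain ⟨a, has, ha⟩ := hs
  have hreach : ∀ b ∈ A, ReflTransGen (Step G) a b ∧ ReflTransGen (Step G) b a :=
    fun b hb => ⟨(hA.mem_reach_iff ha).2 hb, (hA.mem_reach_iff hb).2 ha⟩
  have hloop : TransGen (Step G) a a := by
    obtain ⟨b, hab⟩ := exists_step hn a
    exact TransGen.head' hab (hreach b ((hA.mem_reach_iff ha).1 (ReflTransGen.single hab))).2
  obtain ⟨π, hπ0, hπ, hfreq⟩ := exists_path_frequently_of_finite hloop A.toFinite hreach
  replace hπ : IsPath G π := hπ
  have hπA : ∀ t, π t ∈ A := fun t => (hA.mem_reach_iff ha).1 (hπ0 ▸ hπ.mem_reach t.zero_le)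
  have hfair : Fair G π := fair_of_forall_mem_of_infOften hA hπA
    fun b hb => infOften_iff_frequently.2 (hfreq b hb)
  obtain ⟨π', hπ', hπ'0, p, hp⟩ := hπ.exists_prepend (hπ0 ▸ has)
  refine ⟨π', hπ', hfair.of_forall_add_eq hp, hπ'0, p, fun t ht => ?_⟩
  obtain ⟨k, rfl⟩ := Nat.exists_eq_add_of_le' ht
  exact hp k ▸ hπA k

theorem mem_strongBasin_of_mem_reach {w y : BNState n} (hw : w ∈ strongBasin G A)
    (hy : y ∈ reach G w) : y ∈ strongBasin G A := by
  have hsub := reach_subset_of_mem_reach hy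
  refine ⟨?_, fun B hB hBA => Set.subset_eq_empty (Set.inter_subset_inter_left B hsub)
    (hw.2 B hB hBA)⟩
  obtain ⟨B, hB, hBy⟩ := exists_isAttractor_subset_reach (G := G) y
  obtain ⟨b, hb⟩ := hB.1
  by_cases hBA : B = A
  · exact ⟨b, hBy hb, hBA ▸ hb⟩
  · exact absurd (hw.2 B hB hBA) (Set.nonempty_iff_ne_empty.mp ⟨b, hsub (hBy hb), hb⟩)

theorem mem_strongBasin_iff_forall_fair (hn : 1 ≤ n) (hA : IsAttractor G A) :
    s ∈ strongBasin G A ↔ ∀ π, IsPath G π → Fair G π → π 0 = s → ∃ k, π k ∈ A := by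
  constructor
  · rintro ⟨-, hother⟩ π hπ hf rfl
    obtain ⟨B, N, hB, hN⟩ := hf.exists_isAttractor hπ
    obtain rfl : B = A := by
      by_contra hBA
      exact absurd (hother B hB hBA)
        (Set.Nonempty.ne_empty ⟨π N, hπ.mem_reach N.zero_le, hN N le_rfl⟩)
    exact ⟨N, hN N le_rfl⟩
  · intro h
    refine ⟨?_, fun B hB hBA => Set.not_nonempty_iff_eq_empty.mp fun hsB => hBA ?_⟩
    · obtain ⟨B, hB, hBs⟩ := exists_isAttractor_subset_reach (G := G) s
      obtain ⟨π, hπ, hf, rfl, -⟩ := hB.exists_fair_path hn (hB.1.mono fun b hb => ⟨hBs hb, hb⟩)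
      obtain ⟨k, hk⟩ := h π hπ hf rfl
      exact ⟨π k, hπ.mem_reach k.zero_le, hk⟩
    · obtain ⟨π, hπ, hf, rfl, N, hN⟩ := hB.exists_fair_path hn hsB
      obtain ⟨k, hk⟩ := h π hπ hf rfl
      have hlate : π (max k N) ∈ A := (hA.mem_reach_iff hk).1 (hπ.mem_reach (le_max_left k N))
      exact hB.eq_of_mem hA (hN _ (le_max_right k N)) hlate

theorem mem_strongBasinSet_iff {SC W : Set (BNState n)} (hs : s ∈ SC) :
    s ∈ strongBasinSet G SC W ↔
      ∀ A, IsAttractor G A → (reach G s ∩ A).Nonempty → (A ∩ W).Nonempty := by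
  refine ⟨fun ⟨_, _, hother⟩ A hA hsA => ?_, fun h => ⟨hs, ?_, fun A hA hAW => ?_⟩⟩
  · by_contra hAW
    exact Set.nonempty_iff_ne_empty.mp hsA (hother A hA (Set.not_nonempty_iff_eq_empty.mp hAW))
  · obtain ⟨A, hA, hAs⟩ := exists_isAttractor_subset_reach (G := G) s
    obtain ⟨w, hwA, hwW⟩ := h A hA (hA.1.mono fun a ha => ⟨hAs ha, ha⟩)
    exact ⟨w, hAs hwA, hwW⟩
  · by_contra hsA
    exact Set.nonempty_iff_ne_empty.mp
      (h A hA (Set.nonempty_iff_ne_empty.mpr hsA)) hAW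

theorem forall_fair_eventually_mem_iff (hn : 1 ≤ n) {W : Set (BNState n)}
    (hW : ∀ w ∈ W, reach G w ⊆ W) :
    (∀ ρ, IsPath G ρ → Fair G ρ → ρ 0 = s → ∃ t0, ∀ t, t0 ≤ t → ρ t ∈ W) ↔
      ∀ A, IsAttractor G A → (reach G s ∩ A).Nonempty → (A ∩ W).Nonempty := by
  constructor
  · intro h A hA hsA
    obtain ⟨ρ, hρ, hf, hρ0, N, hN⟩ := hA.exists_fair_path hn hsA
    obtain ⟨t0, ht0⟩ := h ρ hρ hf hρ0
    exact ⟨ρ (max N t0), hN _ (le_max_left N t0), ht0 _ (le_max_right N t0)⟩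
  · rintro h ρ hρ hf rfl
    obtain ⟨A, N, hA, hN⟩ := hf.exists_isAttractor hρ
    obtain ⟨w, hwA, hwW⟩ := h A hA ⟨ρ N, hρ.mem_reach N.zero_le, hN N le_rfl⟩
    exact ⟨N, fun t ht => hW w hwW ((hA.mem_reach_iff hwA).2 (hN t ht))⟩

end Dynamics

section Control

variable {n : ℕ} {O I : Finset (Fin n)} {F : Fin n → BNState n → Bool}

theorem applyControl_mem_ctrlSpace (hOI : Disjoint O I) (s : BNState n) :
    applyControl O I s ∈ ctrlSpace O I :=
  ⟨fun i hi => by simp [applyControl, hi],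
    fun i hi => by simp [applyControl, hi, Finset.disjoint_right.mp hOI hi]⟩

theorem mem_ctrlSpace_inter_reach_of_step_ctrlF {b c : BNState n} (hb : b ∈ ctrlSpace O I)
    (h : Step (ctrlF O I F) b c) : c ∈ ctrlSpace O I ∩ reach F b := by
  rcases h with ⟨i, h₁, h₂, h₃⟩ | ⟨rfl, -⟩
  · -- inside `S|_C` the controlled functions agree with the state on `O ∪ I`, so no such `i` flips
    have hiO : i ∉ O := fun hi => by simp [ctrlF, hi, hb.1 i hi] at h₁ h₂; simp_all
    have hiI : i ∉ I := fun hi => by simp [ctrlF, hi, hiO, hb.2 i hi] at h₁ h₂; simp_all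
    have hF : ctrlF O I F i b = F i b := by simp [ctrlF, hiO, hiI]
    refine ⟨⟨fun j hj => ?_, fun j hj => ?_⟩, ReflTransGen.single (Or.inl ⟨i, hF ▸ h₁, h₂, h₃⟩)⟩
    · rw [h₃ j (by rintro rfl; exact hiO hj)]; exact hb.1 j hj
    · rw [h₃ j (by rintro rfl; exact hiI hj)]; exact hb.2 j hj
  · exact ⟨hb, ReflTransGen.refl⟩

theorem reach_ctrlF_subset {s : BNState n} (hs : s ∈ ctrlSpace O I) :
    reach (ctrlF O I F) s ⊆ ctrlSpace O I ∩ reach F s := by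
  intro t ht
  induction ht with
  | refl => exact ⟨hs, ReflTransGen.refl⟩
  | tail _ hstep ih =>
    obtain ⟨hc, hr⟩ := mem_ctrlSpace_inter_reach_of_step_ctrlF ih.1 hstep
    exact ⟨hc, ReflTransGen.trans ih.2 hr⟩

end Control

/-- `C` is a temporary target control for the attractor `At`
iff `bas^S_TS(At) ∩ S|_C ≠ ∅` and `C(S) ⊆ bas^S_{TS|_C}(bas^S_TS(At) ∩ S|_C)`. -/
theorem ttc_characterisation {n : ℕ} (hn : 1 ≤ n) (F : Fin n → BNState n → Bool)
    (At : Set (BNState n)) (hAt : IsAttractor F At)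
    (O I : Finset (Fin n)) (hOI : Disjoint O I) :
    (∀ s : BNState n, ∀ ρ : ℕ → BNState n,
        IsPath (ctrlF O I F) ρ → Fair (ctrlF O I F) ρ → ρ 0 = applyControl O I s →
        ∃ t0 : ℕ, ∀ t, t0 ≤ t →
          ∀ π : ℕ → BNState n, IsPath F π → Fair F π → π 0 = ρ t → ∃ k, π k ∈ At)
    ↔ ((strongBasin F At ∩ ctrlSpace O I).Nonempty ∧
        Set.range (applyControl O I) ⊆
          strongBasinSet (ctrlF O I F) (ctrlSpace O I)
            (strongBasin F At ∩ ctrlSpace O I)) := by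
  set W := strongBasin F At ∩ ctrlSpace O I
  have hW : ∀ w ∈ W, reach (ctrlF O I F) w ⊆ W := fun w hw y hy =>
    have hy' := reach_ctrlF_subset hw.2 hy
    ⟨mem_strongBasin_of_mem_reach hw.1 hy'.2, hy'.1⟩
  rw [Set.range_subset_iff]
  refine (forall_congr' fun s => ?_).trans
    ⟨fun h => ⟨(h default).2.1.mono Set.inter_subset_right, h⟩, And.right⟩
  have hs := applyControl_mem_ctrlSpace hOI s
  rw [mem_strongBasinSet_iff hs, ← forall_fair_eventually_mem_iff hn hW]
  refine forall₄_congr fun ρ hρ _ hρ0 => exists_congr fun t0 => forall₂_congr fun t _ => ?_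
  have hρt := (reach_ctrlF_subset hs (hρ0 ▸ hρ.mem_reach t.zero_le)).1
  rw [← mem_strongBasin_iff_forall_fair hn hAt]
  exact (and_iff_left hρt).symm
end

section
/- Let π = s_0 → s_1 → s_2 → … be a fair infinite path in the asynchronous transition system TS of a Boolean network BN. Then the set X of states that occur infinitely often in π is an attractor of TS; in particular, every fair infinite path eventually stays forever inside some attractor. -/
/-- the set of states occurring infinitely often in a fair infinite
path is an attractor; in particular every fair path eventually stays forever inside
some attractor. -/
theorem fair_path_settles_in_attractor {n : ℕ} (hn : 1 ≤ n)
    (F : Fin n → BNState n → Bool) (π : ℕ → BNState n)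
    (hπ : IsPath F π) (hfair : Fair F π) :
    IsAttractor F {x | InfOften π x} ∧
    ∃ A, IsAttractor F A ∧ ∃ N, ∀ k, N ≤ k → π k ∈ A := by
  classical
  set X : Set (BNState n) := {x | InfOften π x} with hXdef
  have hseg : ∀ k k', k ≤ k' → Relation.ReflTransGen (Step F) (π k) (π k') := by
    intro k k' h
    induction k', h using Nat.le_induction with
    | base => exact .refl
    | succ m hm ih => exact ih.tail (hπ m)
  have hNE : X.Nonempty := by
    obtain ⟨x, hx⟩ := Finite.exists_infinite_fiber π
    refine ⟨x, fun N => ?_⟩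
    obtain ⟨k, hk1, hk2⟩ := (Set.infinite_coe_iff.mp hx).exists_gt N
    exact ⟨k, le_of_lt hk2, hk1⟩
  have hreach : ∀ s ∈ X, reach F s = X := by
    intro s hs
    apply Set.Subset.antisymm
    · intro y hy
      simp only [reach, Set.mem_setOf_eq] at hy
      induction hy with
      | refl => exact hs
      | tail h1 h2 ih => exact hfair _ ih _ h2
    · intro y hy
      obtain ⟨k, _, hk⟩ := hs 0
      obtain ⟨k', hkk', hk'⟩ := hy k
      have := hseg k k' hkk'
      rw [hk, hk'] at this
      exact this
  have hmin : ∀ B, B ⊆ X → B.Nonempty → (∀ s ∈ B, reach F s = B) → B = X := by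
    intro B hBX ⟨b, hb⟩ hB
    rw [← hB b hb]
    exact hreach b (hBX hb)
  have hAtt : IsAttractor F X := ⟨hNE, hreach, hmin⟩
  refine ⟨hAtt, X, hAtt, ?_⟩
  have h : ∀ x : BNState n, ∃ N, x ∈ X ∨ ∀ k, N ≤ k → π k ≠ x := by
    intro x
    by_cases hx : x ∈ X
    · exact ⟨0, Or.inl hx⟩
    · have hx' : ¬ InfOften π x := hx
      unfold InfOften at hx'
      push_neg at hx'
      obtain ⟨N, hN⟩ := hx'
      exact ⟨N, Or.inr hN⟩
  refine ⟨Finset.univ.sup (fun x => Classical.choose (h x)), fun k hk => ?_⟩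
  rcases Classical.choose_spec (h (π k)) with hmem | hne
  · exact hmem
  · exact absurd rfl (hne k (le_trans (Finset.le_sup (f := fun x => Classical.choose (h x)) (Finset.mem_univ (π k))) hk))
end

section
/- Let C = (𝕆,𝟙) be a control on a Boolean network BN and let A be an attractor of the asynchronous transition system TS of BN. If A ⊆ S|_C, then A is also an attractor of the controlled transition system TS|_C. -/
/-- an attractor of `TS` contained in `S|_C` is also an attractor
of `TS|_C`. -/
theorem attractor_preserved_under_control {n : ℕ} (hn : 1 ≤ n)
    (F : Fin n → BNState n → Bool) (O I : Finset (Fin n)) (hOI : Disjoint O I)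
    (A : Set (BNState n)) (hA : IsAttractor F A) (hsub : A ⊆ ctrlSpace O I) :
    IsAttractor (ctrlF O I F) A := by
  obtain ⟨hne, hreach, hmin⟩ := hA
  have hF2C : ∀ s s', s ∈ ctrlSpace O I → s' ∈ ctrlSpace O I → Step F s s' →
      Step (ctrlF O I F) s s' := by
    intro s s' hs hs' h
    rcases h with ⟨i, h1, h2, h3⟩ | ⟨h1, i, h2⟩
    · left
      refine ⟨i, ?_, h2, h3⟩
      have hiO : i ∉ O := by
        intro hi
        rw [hs'.1 i hi, hs.1 i hi] at h2
        simp at h2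
      have hiI : i ∉ I := by
        intro hi
        rw [hs'.2 i hi, hs.2 i hi] at h2
        simp at h2
      simpa [ctrlF, hiO, hiI] using h1
    · right
      refine ⟨h1, ?_⟩
      by_cases hiO : i ∈ O
      · exact ⟨i, by simp [ctrlF, hiO, hs.1 i hiO]⟩
      by_cases hiI : i ∈ I
      · exact ⟨i, by simp [ctrlF, hiO, hiI, hs.2 i hiI]⟩
      · exact ⟨i, by simpa [ctrlF, hiO, hiI] using h2⟩
  have hC2F : ∀ s s', s ∈ ctrlSpace O I → Step (ctrlF O I F) s s' →
      s' = s ∨ Step F s s' := by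
    intro s s' hs h
    rcases h with ⟨i, h1, h2, h3⟩ | ⟨h1, _⟩
    · right
      have hiO : i ∉ O := by
        intro hi
        rw [hs.1 i hi] at h2
        simp [ctrlF, hi] at h1
        rw [h1] at h2
        simp at h2
      have hiI : i ∉ I := by
        intro hi
        rw [hs.2 i hi] at h2
        simp [ctrlF, hiO, hi] at h1
        rw [h1] at h2
        simp at h2
      exact Or.inl ⟨i, by simpa [ctrlF, hiO, hiI] using h1, h2, h3⟩
    · exact Or.inl h1
  -- reach of ctrlF from any state of A equals A
  have key : ∀ s ∈ A, reach (ctrlF O I F) s = A := by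
    intro s hsA
    apply Set.Subset.antisymm
    · intro a ha
      induction ha with
      | refl => exact hsA
      | tail h1 h2 ih =>
        rcases hC2F _ _ (hsub ih) h2 with rfl | hstep
        · exact ih
        · rw [← hreach _ ih]
          exact Relation.ReflTransGen.single hstep
    · intro a haA
      have haR : Relation.ReflTransGen (Step F) s a := by
        rw [← hreach s hsA] at haA
        exact haA
      clear haA
      induction haR with
      | refl => exact Relation.ReflTransGen.refl
      | tail h1 h2 ih =>
        rename_i mid c
        have hmidA : mid ∈ A := by rw [← hreach s hsA]; exact h1
        have hcA : c ∈ A := by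
          rw [← hreach mid hmidA]
          exact Relation.ReflTransGen.single h2
        exact Relation.ReflTransGen.tail ih (hF2C _ _ (hsub hmidA) (hsub hcA) h2)
  refine ⟨hne, key, ?_⟩
  intro B hBA hBne hBreach
  obtain ⟨b, hb⟩ := hBne
  rw [← hBreach b hb, key b (hBA hb)]
end

section
/- Let A_t be an attractor of the asynchronous transition system TS of a Boolean network BN, and let W ⊆ {0,1}^n be a schema with off-set 𝕆, on-set 𝟙 and don't-care-set D such that W ⊆ bas^S(A_t). Then the control C = (𝕆,𝟙) is an instantaneous target control for A_t: for every state s ∈ S, every fair infinite path of TS starting from C(s) eventually reaches a state of A_t. -/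
/-- if `W` is a schema contained in the strong basin of the attractor
`At`, then the control given by its support variables is an instantaneous target
control for `At`. -/
theorem schema_in_strongBasin_gives_itc {n : ℕ} (hn : 1 ≤ n)
    (F : Fin n → BNState n → Bool) (At : Set (BNState n)) (hAt : IsAttractor F At)
    (O I D : Finset (Fin n)) (W : Set (BNState n))
    (hW : IsSchema W O I D) (hsub : W ⊆ strongBasin F At) :
    ∀ s : BNState n, ∀ π : ℕ → BNState n,
      IsPath F π → Fair F π → π 0 = applyControl O I s → ∃ k, π k ∈ At := by
  intro s π hpath hfair h0
  have hOI : Disjoint O I := hW.1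
  have h0W : π 0 ∈ W := by
    rw [hW.2.2.2.2, h0]
    refine ⟨fun i hi => by simp [applyControl, hi], fun i hi => ?_⟩
    have hiO : i ∉ O := Finset.disjoint_right.mp hOI hi
    simp [applyControl, hiO, hi]
  have hsb := hsub h0W
  have seg : ∀ k m, k ≤ m → Relation.ReflTransGen (Step F) (π k) (π m) := by
    intro k m hkm
    induction m, hkm using Nat.le_induction with
    | base => exact .refl
    | succ m hm ih => exact ih.tail (hpath m)
  obtain ⟨x, hx⟩ := Finite.exists_infinite_fiber π
  have hxio : InfOften π x := by
    intro N
    obtain ⟨m, hm, hle⟩ := (Set.infinite_coe_iff.mp hx).exists_gt N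
    exact ⟨m, hle.le, hm⟩
  set T : Set (BNState n) := {y | InfOften π y} with hT
  have hxT : x ∈ T := hxio
  have Tclosed : ∀ a ∈ T, ∀ b, Relation.ReflTransGen (Step F) a b → b ∈ T := by
    intro a ha b hab
    induction hab with
    | refl => exact ha
    | tail h1 h2 ih => exact hfair _ ih _ h2
  have reach_eq : ∀ a ∈ T, reach F a = T := by
    intro a ha
    ext b
    constructor
    · intro hb; exact Tclosed a ha b hb
    · intro hb
      obtain ⟨k, _, hk⟩ := ha 0
      obtain ⟨m, hkm, hm⟩ := hb k
      show Relation.ReflTransGen (Step F) a b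
      rw [← hk, ← hm]
      exact seg k m hkm
  have hTattr : IsAttractor F T := by
    refine ⟨⟨x, hxT⟩, reach_eq, ?_⟩
    intro B hBT hBne hBr
    obtain ⟨b, hb⟩ := hBne
    have hb2 := hBr b hb
    rw [reach_eq b (hBT hb)] at hb2
    exact hb2.symm
  have hreach0 : T ⊆ reach F (π 0) := by
    intro b hb
    obtain ⟨m, _, hm⟩ := hb 0
    show Relation.ReflTransGen (Step F) (π 0) b
    rw [← hm]
    exact seg 0 m (Nat.zero_le m)
  have hTA : T = At := by
    by_contra hne
    have hemp := hsb.2 T hTattr hne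
    have hx' : x ∈ reach F (π 0) ∩ T := ⟨hreach0 hxT, hxT⟩
    rw [hemp] at hx'
    exact hx'
  obtain ⟨k, _, hk⟩ := hxio 0
  exact ⟨k, by rw [hk, ← hTA]; exact hxT⟩
end
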